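/- arXiv:1809.03814 — 2 statements merged into one kernel-verified Lean document; each statement's English description precedes it below -/
import Mathlib

section
/- Any decoding system T (a set of DPO rewrite rules, one for each triple (α,σ₁,σ₂) of an encoding edge label and two node-vertex labels, whose left-hand side is a single α-labelled edge between a σ₁-node and a σ₂-node and whose right-hand side is a string graph on the same two node-vertices containing at least one additional vertex and no inputs, outputs or encoding edges) is confluent and terminating as a rewrite system on encoded string graphs. -/
/-- Vertex labels: node-vertex labels, wire-vertex labels, and nonterminal labels. -/
inductive VLab : Type
  | node : ℕ → VLab
  | wire : ℕ → VLab
  | nt : ℕ → VLab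
  deriving DecidableEq

/-- Edge labels: plain (terminal) labels and encoding labels. -/
inductive ELab : Type
  | plain : ℕ → ELab
  | enc : ℕ → ELab
  deriving DecidableEq

def VLab.isNode : VLab → Bool | .node _ => true | _ => false
def VLab.isWire : VLab → Bool | .wire _ => true | _ => false
def VLab.isNT : VLab → Bool | .nt _ => true | _ => false
def ELab.isEnc : ELab → Bool | .enc _ => true | _ => false

/-- A finite labelled directed graph with vertices drawn from ℕ. -/
structure LabGraph : Type where
  V : Finset ℕ
  E : Finset (ℕ × ELab × ℕ)
  lab : ℕ → VLab

def inDeg (H : LabGraph) (v : ℕ) : ℕ := (H.E.filter (fun e => e.2.2 = v)).card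
def outDeg (H : LabGraph) (v : ℕ) : ℕ := (H.E.filter (fun e => e.1 = v)).card

/-- Edges connect distinct vertices of the graph (no self-loops). -/
def WellFormed (H : LabGraph) : Prop := ∀ e ∈ H.E, e.1 ∈ H.V ∧ e.2.2 ∈ H.V ∧ e.1 ≠ e.2.2

/-- A string graph: wire-vertices have in/out-degree at most one, no encoding
edges, and node-vertices are adjacent only to wire-vertices. -/
def StringGraph (H : LabGraph) : Prop :=
  WellFormed H ∧
  (∀ v ∈ H.V, (H.lab v).isNode = true ∨ (H.lab v).isWire = true) ∧
  (∀ v ∈ H.V, (H.lab v).isWire = true → inDeg H v ≤ 1 ∧ outDeg H v ≤ 1) ∧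
  (∀ e ∈ H.E, e.2.1.isEnc = false) ∧
  (∀ e ∈ H.E, ¬((H.lab e.1).isNode = true ∧ (H.lab e.2.2).isNode = true))

/-- An encoded string graph: like a string graph but encoding-labelled edges
between node-vertices are allowed. -/
def EncodedSG (H : LabGraph) : Prop :=
  WellFormed H ∧
  (∀ v ∈ H.V, (H.lab v).isNode = true ∨ (H.lab v).isWire = true) ∧
  (∀ v ∈ H.V, (H.lab v).isWire = true → inDeg H v ≤ 1 ∧ outDeg H v ≤ 1) ∧
  (∀ e ∈ H.E, if e.2.1.isEnc = true
    then (H.lab e.1).isNode = true ∧ (H.lab e.2.2).isNode = true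
    else ¬((H.lab e.1).isNode = true ∧ (H.lab e.2.2).isNode = true))

/-- Number of encoding edges. -/
def encCount (H : LabGraph) : ℕ := (H.E.filter (fun e => e.2.1.isEnc = true)).card

def isInput (H : LabGraph) (v : ℕ) : Prop := (H.lab v).isWire = true ∧ inDeg H v = 0
def isOutput (H : LabGraph) (v : ℕ) : Prop := (H.lab v).isWire = true ∧ outDeg H v = 0

/-- A decoding rule: a replacement fragment with two distinguished node-vertices. -/
structure DecRule : Type where
  F : LabGraph
  src : ℕ
  tgt : ℕ

/-- A decoding system: one rule for every triple (encoding label, node label, node label). -/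
structure DecSystem : Type where
  rule : ℕ → ℕ → ℕ → DecRule

/-- The rule for (α,σ₁,σ₂) has as RHS a string graph on the two node-vertices with at
least one additional vertex and no inputs, outputs or encoding edges. -/
def ValidDecRule (R : DecRule) (s1 s2 : ℕ) : Prop :=
  R.src ∈ R.F.V ∧ R.tgt ∈ R.F.V ∧ R.src ≠ R.tgt ∧
  R.F.lab R.src = VLab.node s1 ∧ R.F.lab R.tgt = VLab.node s2 ∧
  StringGraph R.F ∧ 3 ≤ R.F.V.card ∧
  (∀ v ∈ R.F.V, (R.F.lab v).isNode = true → v = R.src ∨ v = R.tgt) ∧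
  (∀ v ∈ R.F.V, (R.F.lab v).isWire = true → inDeg R.F v = 1 ∧ outDeg R.F v = 1)

def ValidDecSystem (T : DecSystem) : Prop := ∀ a s1 s2, ValidDecRule (T.rule a s1 s2) s1 s2

/-- One DPO decoding step: remove one encoding edge and glue in a fresh copy of the
corresponding rule's right-hand side on its two endpoints. -/
def DecStep (T : DecSystem) (H H' : LabGraph) : Prop :=
  ∃ u a w s1 s2, (u, ELab.enc a, w) ∈ H.E ∧
    H.lab u = VLab.node s1 ∧ H.lab w = VLab.node s2 ∧
    ∃ ρ : ℕ → ℕ,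
      Set.InjOn ρ ↑(T.rule a s1 s2).F.V ∧
      ρ (T.rule a s1 s2).src = u ∧ ρ (T.rule a s1 s2).tgt = w ∧
      (∀ x ∈ (T.rule a s1 s2).F.V, x ≠ (T.rule a s1 s2).src → x ≠ (T.rule a s1 s2).tgt →
        ρ x ∉ H.V) ∧
      H'.V = H.V ∪ (T.rule a s1 s2).F.V.image ρ ∧
      H'.E = (H.E.erase (u, ELab.enc a, w)) ∪
        (T.rule a s1 s2).F.E.image (fun e => (ρ e.1, e.2.1, ρ e.2.2)) ∧
      (∀ v ∈ H.V, H'.lab v = H.lab v) ∧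
      (∀ x ∈ (T.rule a s1 s2).F.V, H'.lab (ρ x) = (T.rule a s1 s2).F.lab x)

/-- Full decoding: exhaustive application of the decoding system. -/
def FullDecode (T : DecSystem) (H H' : LabGraph) : Prop :=
  Relation.ReflTransGen (DecStep T) H H' ∧ encCount H' = 0

/-- LabGraph isomorphism. -/
def GIso (H K : LabGraph) : Prop :=
  ∃ f : ℕ → ℕ, Set.BijOn f ↑H.V ↑K.V ∧
    (∀ v ∈ H.V, K.lab (f v) = H.lab v) ∧
    (∀ u l w, u ∈ H.V → w ∈ H.V → ((u, l, w) ∈ H.E ↔ (f u, l, f w) ∈ K.E))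

/-!
A decoding step deletes one encoding edge and inserts only edges of a string graph, so the
number of encoding edges strictly decreases and decoding terminates. Rewrites of two distinct
encoding edges commute, and two rewrites of the same edge differ only in the names of the fresh
vertices, so the system is locally confluent up to isomorphism; moreover steps can be transported
along isomorphisms. Newman's lemma modulo isomorphism then gives confluence up to isomorphism.
-/

section ModuloEquivalence

open Relation

variable {α : Type*} {r e : α → α → Prop} {P : α → Prop}

theorem Relation.ReflTransGen.invariant (hP : ∀ a b, r a b → P a → P b) {a b : α}
    (hab : ReflTransGen r a b) (ha : P a) : P b := by
  induction hab with
  | refl => exact ha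
  | tail _ hbc ih => exact hP _ _ hbc ih

theorem exists_reflTransGen_normal (hwf : WellFounded (flip r)) (a : α) :
    ∃ b, ReflTransGen r a b ∧ ∀ c, ¬r b c := by
  induction a using hwf.induction with
  | _ a ih =>
    by_cases hstep : ∃ c, r a c
    · obtain ⟨c, hac⟩ := hstep
      obtain ⟨b, hcb, hb⟩ := ih c hac
      exact ⟨b, .head hac hcb, hb⟩
    · exact ⟨a, .refl, not_exists.mp hstep⟩

theorem Relation.ReflTransGen.simulate (hP : ∀ a b, r a b → P a → P b)
    (hsim : ∀ a b a', P a → P b → e a b → r a a' → ∃ b', r b b' ∧ e a' b')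
    {a a' b : α} (hab : e a b) (ha : P a) (hb : P b)
    (h : ReflTransGen r a a') : ∃ b', ReflTransGen r b b' ∧ e a' b' := by
  induction h using ReflTransGen.head_induction_on generalizing b with
  | refl => exact ⟨b, .refl, hab⟩
  | head hac _ ih =>
    obtain ⟨c', hbc', hcc'⟩ := hsim _ _ _ ha hb hab hac
    obtain ⟨b', hc'b', hb'⟩ := ih hcc' (hP _ _ hac ha) (hP _ _ hbc' hb)
    exact ⟨b', .head hbc' hc'b', hb'⟩

theorem normal_forms_equiv (hP : ∀ a b, r a b → P a → P b)
    (hsim : ∀ a b a', P a → P b → e a b → r a a' → ∃ b', r b b' ∧ e a' b')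
    (hwf : WellFounded (flip r)) (heqv : Equivalence e)
    (hloc : ∀ a b c, P a → r a b → r a c →
      ∃ b' c', ReflTransGen r b b' ∧ ReflTransGen r c c' ∧ e b' c')
    {a n₁ n₂ : α} (ha : P a) (h₁ : ReflTransGen r a n₁) (h₂ : ReflTransGen r a n₂)
    (hn₁ : ∀ c, ¬r n₁ c) (hn₂ : ∀ c, ¬r n₂ c) : e n₁ n₂ := by
  induction a using hwf.induction generalizing n₁ n₂ with
  | _ a ih =>
    rcases h₁.cases_head with rfl | ⟨b₁, hab₁, hb₁n₁⟩
    · rcases h₂.cases_head with rfl | ⟨b₂, hab₂, -⟩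
      · exact heqv.refl _
      · exact (hn₁ _ hab₂).elim
    rcases h₂.cases_head with rfl | ⟨b₂, hab₂, hb₂n₂⟩
    · exact (hn₂ _ hab₁).elim
    obtain ⟨d₁, d₂, hb₁d₁, hb₂d₂, hd⟩ := hloc a b₁ b₂ ha hab₁ hab₂
    have hd₁ := hb₁d₁.invariant hP (hP _ _ hab₁ ha)
    have hd₂ := hb₂d₂.invariant hP (hP _ _ hab₂ ha)
    obtain ⟨m₁, hd₁m₁, hm₁⟩ := exists_reflTransGen_normal hwf d₁
    obtain ⟨m₂, hd₂m₂, hm⟩ := hd₁m₁.simulate hP hsim hd hd₁ hd₂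
    have hm₂ : ∀ c, ¬r m₂ c := fun c hc => by
      obtain ⟨c', hc', -⟩ := hsim _ _ _ (hd₂m₂.invariant hP hd₂) (hd₁m₁.invariant hP hd₁)
        (heqv.symm hm) hc
      exact hm₁ c' hc'
    have h₁ := ih b₁ hab₁ (hP _ _ hab₁ ha) hb₁n₁ (hb₁d₁.trans hd₁m₁) hn₁ hm₁
    have h₂ := ih b₂ hab₂ (hP _ _ hab₂ ha) hb₂n₂ (hb₂d₂.trans hd₂m₂) hn₂ hm₂
    exact heqv.trans h₁ (heqv.trans hm (heqv.symm h₂))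

theorem confluent_modulo (hP : ∀ a b, r a b → P a → P b)
    (hsim : ∀ a b a', P a → P b → e a b → r a a' → ∃ b', r b b' ∧ e a' b')
    (hwf : WellFounded (flip r)) (heqv : Equivalence e)
    (hloc : ∀ a b c, P a → r a b → r a c →
      ∃ b' c', ReflTransGen r b b' ∧ ReflTransGen r c c' ∧ e b' c')
    {a b c : α} (ha : P a) (hab : ReflTransGen r a b) (hac : ReflTransGen r a c) :
    ∃ b' c', ReflTransGen r b b' ∧ ReflTransGen r c c' ∧ e b' c' := by
  obtain ⟨b', hbb', hb'⟩ := exists_reflTransGen_normal hwf b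
  obtain ⟨c', hcc', hc'⟩ := exists_reflTransGen_normal hwf c
  exact ⟨b', c', hbb', hcc',
    normal_forms_equiv hP hsim hwf heqv hloc ha (hab.trans hbb') (hac.trans hcc') hb' hc'⟩

theorem not_exists_infinite_chain (hwf : WellFounded (flip r)) (a : α) :
    ¬∃ f : ℕ → α, f 0 = a ∧ ∀ n, r (f n) (f (n + 1)) := by
  rintro ⟨f, -, hf⟩
  exact (wellFounded_iff_isEmpty_descending_chain.1 hwf).false ⟨f, hf⟩

end ModuloEquivalence

theorem Finset.image_erase_of_injOn {α β : Type*} [DecidableEq α] [DecidableEq β] {f : α → β}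
    {s : Finset α} (hf : Set.InjOn f s) {a : α} (ha : a ∈ s) :
    (s.erase a).image f = (s.image f).erase (f a) := by
  rw [erase_eq, image_sdiff_of_injOn hf (singleton_subset_iff.2 ha), image_singleton, ← erase_eq]

def edgeMap (g : ℕ → ℕ) (e : ℕ × ELab × ℕ) : ℕ × ELab × ℕ := (g e.1, e.2.1, g e.2.2)

theorem edgeMap_injOn {H : LabGraph} {g : ℕ → ℕ} (hH : WellFormed H) (hg : Set.InjOn g H.V) :
    Set.InjOn (edgeMap g) H.E := by
  intro d hd d' hd' hdd
  obtain ⟨h1, h2, -⟩ := hH d hd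
  obtain ⟨h1', h2', -⟩ := hH d' hd'
  simp only [edgeMap, Prod.mk.injEq] at hdd
  exact Prod.ext (hg h1 h1' hdd.1) (Prod.ext hdd.2.1 (hg h2 h2' hdd.2.2))

theorem image_edgeMap_congr {s : Finset (ℕ × ELab × ℕ)} {g g' : ℕ → ℕ}
    (h : ∀ d ∈ s, g d.1 = g' d.1 ∧ g d.2.2 = g' d.2.2) :
    s.image (edgeMap g) = s.image (edgeMap g') :=
  Finset.image_congr fun d hd => by simp only [edgeMap, (h d hd).1, (h d hd).2]

def GIsoVia (f : ℕ → ℕ) (H K : LabGraph) : Prop :=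
  Set.BijOn f ↑H.V ↑K.V ∧ (∀ v ∈ H.V, K.lab (f v) = H.lab v) ∧
    ∀ u l w, u ∈ H.V → w ∈ H.V → ((u, l, w) ∈ H.E ↔ (f u, l, f w) ∈ K.E)

namespace GIsoVia

variable {f g : ℕ → ℕ} {H K L : LabGraph}

theorem id_self (H : LabGraph) : GIsoVia id H H :=
  ⟨Set.bijOn_id _, fun _ _ => rfl, fun _ _ _ _ _ => Iff.rfl⟩

theorem comp (hf : GIsoVia f H K) (hg : GIsoVia g K L) : GIsoVia (g ∘ f) H L := by
  refine ⟨hg.1.comp hf.1, fun v hv => ?_, fun p l q hp hq => ?_⟩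
  · rw [Function.comp_apply, hg.2.1 _ (hf.1.mapsTo hv), hf.2.1 v hv]
  · rw [hf.2.2 p l q hp hq, hg.2.2 _ l _ (hf.1.mapsTo hp) (hf.1.mapsTo hq)]
    rfl

theorem invFunOn (hf : GIsoVia f H K) : GIsoVia (Function.invFunOn f H.V) K H := by
  have hinv := hf.1.invOn_invFunOn
  have hmaps := hf.1.surjOn.mapsTo_invFunOn
  refine ⟨hf.1.symm hinv.symm, fun k hk => ?_, fun p l q hp hq => ?_⟩
  · rw [← hf.2.1 _ (hmaps hk), hinv.2 hk]
  · rw [hf.2.2 _ l _ (hmaps hp) (hmaps hq), hinv.2 hp, hinv.2 hq]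

theorem V_eq_image (hf : GIsoVia f H K) : K.V = H.V.image f := by
  rw [← Finset.coe_inj, Finset.coe_image, hf.1.image_eq]

theorem E_eq_image (hf : GIsoVia f H K) (hH : WellFormed H) (hK : WellFormed K) :
    K.E = H.E.image (edgeMap f) := by
  refine Finset.Subset.antisymm (fun ⟨p, l, q⟩ he => ?_) (Finset.image_subset_iff.2 fun d hd =>
    (hf.2.2 _ _ _ (hH d hd).1 (hH d hd).2.1).1 hd)
  obtain ⟨hp, hq, -⟩ := hK _ he
  obtain ⟨p', hp', rfl⟩ := hf.1.surjOn hp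
  obtain ⟨q', hq', rfl⟩ := hf.1.surjOn hq
  exact Finset.mem_image_of_mem _ ((hf.2.2 p' l q' hp' hq').2 he)

theorem of_image (hH : WellFormed H) (hg : Set.InjOn g H.V) (hV : K.V = H.V.image g)
    (hlab : ∀ v ∈ H.V, K.lab (g v) = H.lab v) (hE : K.E = H.E.image (edgeMap g)) :
    GIsoVia g H K := by
  refine ⟨?_, hlab, fun p l q hp hq => ?_⟩
  · rw [hV, Finset.coe_image]
    exact hg.bijOn_image
  · rw [hE]
    constructor
    · exact fun he => Finset.mem_image_of_mem (edgeMap g) he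
    · intro he
      obtain ⟨⟨p', l', q'⟩, hd, hdd⟩ := Finset.mem_image.1 he
      simp only [edgeMap, Prod.mk.injEq] at hdd
      obtain ⟨hpp', rfl, hqq'⟩ := hdd
      obtain ⟨hp', hq', -⟩ := hH _ hd
      rwa [← hg hp' hp hpp', ← hg hq' hq hqq']

end GIsoVia

theorem gIso_equivalence : Equivalence GIso where
  refl H := ⟨id, GIsoVia.id_self H⟩
  symm := fun ⟨_, hf⟩ => ⟨_, GIsoVia.invFunOn hf⟩
  trans := fun ⟨_, hf⟩ ⟨_, hg⟩ => ⟨_, GIsoVia.comp hf hg⟩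

theorem ValidDecSystem.isEnc_eq_false_of_mem_image {T : DecSystem} (hT : ValidDecSystem T)
    {a s1 s2 : ℕ} {ρ : ℕ → ℕ} {e : ℕ × ELab × ℕ}
    (he : e ∈ (T.rule a s1 s2).F.E.image (edgeMap ρ)) : e.2.1.isEnc = false := by
  obtain ⟨-, -, -, -, -, ⟨-, -, -, hnenc, -⟩, -⟩ := hT a s1 s2
  obtain ⟨d, hd, rfl⟩ := Finset.mem_image.1 he
  exact hnenc d hd

theorem ValidDecSystem.enc_not_mem_image {T : DecSystem} (hT : ValidDecSystem T)
    {a s1 s2 : ℕ} {ρ : ℕ → ℕ} {p b q : ℕ} :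
    (p, ELab.enc b, q) ∉ (T.rule a s1 s2).F.E.image (edgeMap ρ) := fun he => by
  simpa [ELab.isEnc] using hT.isEnc_eq_false_of_mem_image he

structure DecStepAt (T : DecSystem) (u a w s1 s2 : ℕ) (ρ : ℕ → ℕ) (H H' : LabGraph) : Prop where
  mem_E : (u, ELab.enc a, w) ∈ H.E
  lab_u : H.lab u = VLab.node s1
  lab_w : H.lab w = VLab.node s2
  injOn : Set.InjOn ρ ↑(T.rule a s1 s2).F.V
  map_src : ρ (T.rule a s1 s2).src = u
  map_tgt : ρ (T.rule a s1 s2).tgt = w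
  fresh : ∀ x ∈ (T.rule a s1 s2).F.V, x ≠ (T.rule a s1 s2).src → x ≠ (T.rule a s1 s2).tgt →
    ρ x ∉ H.V
  V_eq : H'.V = H.V ∪ (T.rule a s1 s2).F.V.image ρ
  E_eq : H'.E = H.E.erase (u, ELab.enc a, w) ∪ (T.rule a s1 s2).F.E.image (edgeMap ρ)
  lab_old : ∀ v ∈ H.V, H'.lab v = H.lab v
  lab_new : ∀ x ∈ (T.rule a s1 s2).F.V, H'.lab (ρ x) = (T.rule a s1 s2).F.lab x

theorem decStep_iff {T : DecSystem} {H H' : LabGraph} :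
    DecStep T H H' ↔ ∃ u a w s1 s2 ρ, DecStepAt T u a w s1 s2 ρ H H' := by
  constructor
  · rintro ⟨u, a, w, s1, s2, h1, h2, h3, ρ, h4, h5, h6, h7, h8, h9, h10, h11⟩
    exact ⟨u, a, w, s1, s2, ρ, h1, h2, h3, h4, h5, h6, h7, h8, h9, h10, h11⟩
  · rintro ⟨u, a, w, s1, s2, ρ, h1, h2, h3, h4, h5, h6, h7, h8, h9, h10, h11⟩
    exact ⟨u, a, w, s1, s2, h1, h2, h3, ρ, h4, h5, h6, h7, h8, h9, h10, h11⟩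

theorem exists_decStepAt {T : DecSystem} (hT : ValidDecSystem T) {G : LabGraph}
    {u a w s1 s2 : ℕ} (hG : WellFormed G) (he : (u, ELab.enc a, w) ∈ G.E)
    (hu : G.lab u = VLab.node s1) (hw : G.lab w = VLab.node s2) :
    ∃ ρ G', DecStepAt T u a w s1 s2 ρ G G' := by
  obtain ⟨-, -, hst, hlsrc, hltgt, -⟩ := hT a s1 s2
  obtain ⟨huV, hwV, huw⟩ : u ∈ G.V ∧ w ∈ G.V ∧ u ≠ w := hG _ he
  set R := T.rule a s1 s2
  -- interior vertices of the rule are sent past every vertex of `G`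
  set N := G.V.sup id + 1
  have hN : ∀ v ∈ G.V, v < N := fun v hv => Nat.lt_succ_of_le (Finset.le_sup (f := id) hv)
  have huN := hN u huV
  have hwN := hN w hwV
  set ρ : ℕ → ℕ := fun x => if x = R.src then u else if x = R.tgt then w else N + x with hρ
  have hρ_src : ρ R.src = u := by simp [hρ]
  have hρ_tgt : ρ R.tgt = w := by simp [hρ, Ne.symm hst]
  have hρ_int : ∀ x, x ≠ R.src → x ≠ R.tgt → ρ x = N + x := fun x h1 h2 => by simp [hρ, h1, h2]
  have hfresh : ∀ x, x ≠ R.src → x ≠ R.tgt → N + x ∉ G.V := fun x _ _ hx => by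
    have := hN _ hx
    omega
  have hinj : Function.Injective ρ := by
    intro x y hxy
    simp only [hρ] at hxy
    split_ifs at hxy <;> first | (subst_vars; rfl) | omega
  refine ⟨ρ, ⟨G.V ∪ R.F.V.image ρ, G.E.erase (u, ELab.enc a, w) ∪ R.F.E.image (edgeMap ρ),
      fun v => if v ∈ G.V then G.lab v else R.F.lab (v - N)⟩,
    he, hu, hw, hinj.injOn, hρ_src, hρ_tgt, fun x _ h1 h2 => hρ_int x h1 h2 ▸ hfresh x h1 h2,
    rfl, rfl, fun v hv => if_pos hv, fun x _ => ?_⟩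
  by_cases hxs : x = R.src
  · subst hxs
    simpa [hρ_src, huV, hu] using hlsrc.symm
  by_cases hxt : x = R.tgt
  · subst hxt
    simpa [hρ_tgt, hwV, hw] using hltgt.symm
  · simp [hρ_int x hxs hxt, hfresh x hxs hxt, R]

namespace DecStepAt

variable {T : DecSystem} {u a w s1 s2 : ℕ} {ρ : ℕ → ℕ} {H H' : LabGraph}

theorem decStep (h : DecStepAt T u a w s1 s2 ρ H H') : DecStep T H H' :=
  decStep_iff.2 ⟨u, a, w, s1, s2, ρ, h⟩

theorem subset_V (h : DecStepAt T u a w s1 s2 ρ H H') : H.V ⊆ H'.V :=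
  h.V_eq ▸ Finset.subset_union_left

theorem map_mem_V (h : DecStepAt T u a w s1 s2 ρ H H') {x : ℕ} (hx : x ∈ (T.rule a s1 s2).F.V) :
    ρ x ∈ H'.V :=
  h.V_eq ▸ Finset.mem_union_right _ (Finset.mem_image_of_mem ρ hx)

theorem mem_V (h : DecStepAt T u a w s1 s2 ρ H H') {v : ℕ} :
    v ∈ H'.V ↔ v ∈ H.V ∨ ∃ x ∈ (T.rule a s1 s2).F.V, ρ x = v := by
  simp [h.V_eq]

theorem mem_E_of_ne (h : DecStepAt T u a w s1 s2 ρ H H') {e : ℕ × ELab × ℕ} (he : e ∈ H.E)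
    (hne : e ≠ (u, ELab.enc a, w)) : e ∈ H'.E :=
  h.E_eq ▸ Finset.mem_union_left _ (Finset.mem_erase.2 ⟨hne, he⟩)

theorem enc_mem_E_of_mem (hT : ValidDecSystem T) (h : DecStepAt T u a w s1 s2 ρ H H')
    {p b q : ℕ} (he : (p, ELab.enc b, q) ∈ H'.E) : (p, ELab.enc b, q) ∈ H.E := by
  rw [h.E_eq, Finset.mem_union] at he
  exact Finset.mem_of_mem_erase (he.resolve_right hT.enc_not_mem_image)

theorem eq_src_or_tgt (h : DecStepAt T u a w s1 s2 ρ H H') {x : ℕ}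
    (hx : x ∈ (T.rule a s1 s2).F.V) (hρx : ρ x ∈ H.V) :
    x = (T.rule a s1 s2).src ∨ x = (T.rule a s1 s2).tgt := by
  by_contra hc
  rw [not_or] at hc
  exact h.fresh x hx hc.1 hc.2 hρx

theorem wellFormed (hT : ValidDecSystem T) (h : DecStepAt T u a w s1 s2 ρ H H')
    (hH : WellFormed H) : WellFormed H' := by
  obtain ⟨-, -, -, -, -, ⟨hF, -⟩, -⟩ := hT a s1 s2
  intro e he
  rcases Finset.mem_union.1 (h.E_eq ▸ he) with he | he
  · obtain ⟨h1, h2, h3⟩ := hH e (Finset.mem_of_mem_erase he)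
    exact ⟨h.subset_V h1, h.subset_V h2, h3⟩
  · obtain ⟨d, hd, rfl⟩ := Finset.mem_image.1 he
    obtain ⟨h1, h2, h3⟩ := hF d hd
    exact ⟨h.map_mem_V h1, h.map_mem_V h2, fun h' => h3 (h.injOn h1 h2 h')⟩

theorem encCount_add_one (hT : ValidDecSystem T) (h : DecStepAt T u a w s1 s2 ρ H H') :
    encCount H' + 1 = encCount H := by
  have hnew : ((T.rule a s1 s2).F.E.image (edgeMap ρ)).filter (fun e => e.2.1.isEnc = true) = ∅ :=
    Finset.filter_false_of_mem fun e he => by simp [hT.isEnc_eq_false_of_mem_image he]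
  rw [encCount, encCount, h.E_eq, Finset.filter_union, hnew, Finset.union_empty,
    Finset.filter_erase, Finset.card_erase_add_one
      (Finset.mem_filter.2 ⟨h.mem_E, rfl⟩ : _ ∈ H.E.filter fun e => e.2.1.isEnc = true)]

variable {ρ₂ f : ℕ → ℕ} {K K' : LabGraph}

theorem exists_glue (h : DecStepAt T u a w s1 s2 ρ H H')
    (h₂ : DecStepAt T (f u) a (f w) s1 s2 ρ₂ K K') :
    ∃ g : ℕ → ℕ, (∀ v ∈ H.V, g v = f v) ∧ ∀ x ∈ (T.rule a s1 s2).F.V, g (ρ x) = ρ₂ x := by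
  classical
  refine ⟨fun v => if v ∈ H.V then f v else ρ₂ (Function.invFunOn ρ (T.rule a s1 s2).F.V v),
    fun v hv => if_pos hv, fun x hx => ?_⟩
  dsimp only
  by_cases hρx : ρ x ∈ H.V
  · rw [if_pos hρx]
    rcases h.eq_src_or_tgt hx hρx with rfl | rfl
    · rw [h.map_src, h₂.map_src]
    · rw [h.map_tgt, h₂.map_tgt]
  · rw [if_neg hρx, h.injOn.leftInvOn_invFunOn hx]

theorem injOn_of_glue (hH : WellFormed H) (hf : Set.BijOn f ↑H.V ↑K.V)
    (h : DecStepAt T u a w s1 s2 ρ H H') (h₂ : DecStepAt T (f u) a (f w) s1 s2 ρ₂ K K')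
    {g : ℕ → ℕ} (g_old : ∀ v ∈ H.V, g v = f v)
    (g_new : ∀ x ∈ (T.rule a s1 s2).F.V, g (ρ x) = ρ₂ x) : Set.InjOn g H'.V := by
  obtain ⟨huV, hwV, -⟩ : u ∈ H.V ∧ w ∈ H.V ∧ _ := hH _ h.mem_E
  have old_new : ∀ p ∈ H.V, ∀ y ∈ (T.rule a s1 s2).F.V, g p = g (ρ y) → p = ρ y := by
    intro p hp y hy hpy
    rw [g_old p hp, g_new y hy] at hpy
    rcases h₂.eq_src_or_tgt hy (hpy ▸ hf.mapsTo hp) with rfl | rfl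
    · rw [h₂.map_src] at hpy
      rw [h.map_src, hf.injOn hp huV hpy]
    · rw [h₂.map_tgt] at hpy
      rw [h.map_tgt, hf.injOn hp hwV hpy]
  intro p hp q hq hpq
  rcases h.mem_V.1 hp with hp | ⟨x, hx, rfl⟩ <;> rcases h.mem_V.1 hq with hq | ⟨y, hy, rfl⟩
  · rw [g_old p hp, g_old q hq] at hpq
    exact hf.injOn hp hq hpq
  · exact old_new p hp y hy hpq
  · exact (old_new q hq x hx hpq.symm).symm
  · rw [g_new x hx, g_new y hy] at hpq
    rw [h₂.injOn hx hy hpq]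

theorem gIso (hT : ValidDecSystem T) (hH : WellFormed H) (hK : WellFormed K)
    (hf : GIsoVia f H K) (h : DecStepAt T u a w s1 s2 ρ H H')
    (h₂ : DecStepAt T (f u) a (f w) s1 s2 ρ₂ K K') : GIso H' K' := by
  obtain ⟨-, -, -, -, -, ⟨hF, -⟩, -⟩ := hT a s1 s2
  obtain ⟨g, g_old, g_new⟩ := h.exists_glue h₂
  refine ⟨g, GIsoVia.of_image (h.wellFormed hT hH) ?_ ?_ ?_ ?_⟩
  · exact injOn_of_glue hH hf.1 h h₂ g_old g_new
  · rw [h₂.V_eq, h.V_eq, Finset.image_union, Finset.image_image, hf.V_eq_image,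
      Finset.image_congr g_old, Finset.image_congr (f := g ∘ ρ) g_new]
  · intro v hv
    rcases h.mem_V.1 hv with hv | ⟨x, hx, rfl⟩
    · rw [g_old v hv, h₂.lab_old _ (hf.1.mapsTo hv), hf.2.1 v hv, h.lab_old v hv]
    · rw [g_new x hx, h₂.lab_new x hx, h.lab_new x hx]
  · have hold : (H.E.erase (u, ELab.enc a, w)).image (edgeMap g) =
        K.E.erase (f u, ELab.enc a, f w) := by
      rw [image_edgeMap_congr (g' := f) fun d hd =>
          ⟨g_old _ (hH d (Finset.mem_of_mem_erase hd)).1,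
            g_old _ (hH d (Finset.mem_of_mem_erase hd)).2.1⟩,
        Finset.image_erase_of_injOn (edgeMap_injOn hH hf.1.injOn) h.mem_E, hf.E_eq_image hH hK]
      rfl
    have hnew : ((T.rule a s1 s2).F.E.image (edgeMap ρ)).image (edgeMap g) =
        (T.rule a s1 s2).F.E.image (edgeMap ρ₂) := by
      rw [Finset.image_image]
      exact image_edgeMap_congr (g := g ∘ ρ) fun d hd =>
        ⟨g_new _ (hF d hd).1, g_new _ (hF d hd).2.1⟩
    rw [h₂.E_eq, h.E_eq, Finset.image_union, hold, hnew]

end DecStepAt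

theorem DecStep.exists_gIso_of_gIso {T : DecSystem} (hT : ValidDecSystem T) {H H' K : LabGraph}
    (hH : WellFormed H) (hK : WellFormed K) (hHK : GIso H K) (h : DecStep T H H') :
    ∃ K', DecStep T K K' ∧ GIso H' K' := by
  obtain ⟨f, hf⟩ : ∃ f, GIsoVia f H K := hHK
  obtain ⟨u, a, w, s1, s2, ρ, h⟩ := decStep_iff.1 h
  obtain ⟨huV, hwV, -⟩ : u ∈ H.V ∧ w ∈ H.V ∧ _ := hH _ h.mem_E
  obtain ⟨ρ₂, K', h₂⟩ := exists_decStepAt hT hK ((hf.2.2 u _ w huV hwV).1 h.mem_E)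
    (by rw [hf.2.1 u huV, h.lab_u]) (by rw [hf.2.1 w hwV, h.lab_w])
  exact ⟨K', h₂.decStep, h.gIso hT hH hK hf h₂⟩

theorem DecStep.wellFormed {T : DecSystem} (hT : ValidDecSystem T) {H H' : LabGraph}
    (h : DecStep T H H') (hH : WellFormed H) : WellFormed H' := by
  obtain ⟨_, _, _, _, _, _, h⟩ := decStep_iff.1 h
  exact h.wellFormed hT hH

theorem DecStepAt.swap {T : DecSystem} (hT : ValidDecSystem T) {H C D : LabGraph}
    {u₁ a₁ w₁ s11 s12 u₂ a₂ w₂ s21 s22 : ℕ} {ρ₁ ρ₂ : ℕ → ℕ} (hH : WellFormed H)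
    (h₂ : DecStepAt T u₂ a₂ w₂ s21 s22 ρ₂ H C) (h₁ : DecStepAt T u₁ a₁ w₁ s11 s12 ρ₁ C D)
    (hne : (u₁, ELab.enc a₁, w₁) ≠ (u₂, ELab.enc a₂, w₂)) :
    ∃ L, DecStepAt T u₁ a₁ w₁ s11 s12 ρ₁ H L ∧ DecStepAt T u₂ a₂ w₂ s21 s22 ρ₂ L D := by
  set R₁ := T.rule a₁ s11 s12
  set R₂ := T.rule a₂ s21 s22
  have he₁ := h₂.enc_mem_E_of_mem hT h₁.mem_E
  obtain ⟨hu₁V, hw₁V, -⟩ : u₁ ∈ H.V ∧ w₁ ∈ H.V ∧ _ := hH _ he₁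
  obtain ⟨hu₂V, hw₂V, -⟩ : u₂ ∈ H.V ∧ w₂ ∈ H.V ∧ _ := hH _ h₂.mem_E
  have hold₁ : ∀ y ∈ R₁.F.V, ρ₁ y ∈ C.V → ρ₁ y ∈ H.V := by
    intro y hy hyC
    rcases h₁.eq_src_or_tgt hy hyC with rfl | rfl
    · rwa [h₁.map_src]
    · rwa [h₁.map_tgt]
  have hfresh₂ : ∀ x ∈ R₂.F.V, x ≠ R₂.src → x ≠ R₂.tgt → ρ₂ x ∉ H.V ∪ R₁.F.V.image ρ₁ := by
    intro x hx hxs hxt hmem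
    rcases Finset.mem_union.1 hmem with hmem | hmem
    · exact h₂.fresh x hx hxs hxt hmem
    · obtain ⟨y, hy, hyx⟩ := Finset.mem_image.1 hmem
      exact h₂.fresh x hx hxs hxt (hyx ▸ hold₁ y hy (hyx ▸ h₂.map_mem_V hx))
  refine ⟨⟨H.V ∪ R₁.F.V.image ρ₁, H.E.erase (u₁, ELab.enc a₁, w₁) ∪ R₁.F.E.image (edgeMap ρ₁),
      D.lab⟩,
    ⟨he₁, ?_, ?_, h₁.injOn, h₁.map_src, h₁.map_tgt,
      fun x hx hxs hxt hmem => h₁.fresh x hx hxs hxt (h₂.subset_V hmem), rfl, rfl,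
      fun v hv => ?_, h₁.lab_new⟩,
    ⟨Finset.mem_union_left _ (Finset.mem_erase.2 ⟨hne.symm, h₂.mem_E⟩), ?_, ?_, h₂.injOn,
      h₂.map_src, h₂.map_tgt, hfresh₂, ?_, ?_, fun _ _ => rfl, fun x hx => ?_⟩⟩
  · rw [← h₁.lab_u, h₂.lab_old u₁ hu₁V]
  · rw [← h₁.lab_w, h₂.lab_old w₁ hw₁V]
  · rw [h₁.lab_old v (h₂.subset_V hv), h₂.lab_old v hv]
  · show D.lab u₂ = _
    rw [h₁.lab_old u₂ (h₂.subset_V hu₂V), h₂.lab_old u₂ hu₂V, h₂.lab_u]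
  · show D.lab w₂ = _
    rw [h₁.lab_old w₂ (h₂.subset_V hw₂V), h₂.lab_old w₂ hw₂V, h₂.lab_w]
  · rw [h₁.V_eq, h₂.V_eq, Finset.union_right_comm]
  · rw [h₁.E_eq, h₂.E_eq, Finset.erase_union_distrib, Finset.erase_union_distrib,
      Finset.erase_eq_of_notMem hT.enc_not_mem_image,
      Finset.erase_eq_of_notMem hT.enc_not_mem_image, Finset.erase_right_comm,
      Finset.union_right_comm]
  · show D.lab (ρ₂ x) = _
    rw [h₁.lab_old _ (h₂.map_mem_V hx), h₂.lab_new x hx]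

theorem decStep_locallyConfluent_gIso {T : DecSystem} (hT : ValidDecSystem T)
    {H C₁ C₂ : LabGraph} (hH : WellFormed H) (h₁ : DecStep T H C₁) (h₂ : DecStep T H C₂) :
    ∃ D₁ D₂, Relation.ReflTransGen (DecStep T) C₁ D₁ ∧ Relation.ReflTransGen (DecStep T) C₂ D₂ ∧
      GIso D₁ D₂ := by
  obtain ⟨u₁, a₁, w₁, s11, s12, ρ₁, h₁⟩ := decStep_iff.1 h₁
  obtain ⟨u₂, a₂, w₂, s21, s22, ρ₂, h₂⟩ := decStep_iff.1 h₂
  by_cases hsame : (u₁, ELab.enc a₁, w₁) = (u₂, ELab.enc a₂, w₂)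
  · simp only [Prod.mk.injEq, ELab.enc.injEq] at hsame
    obtain ⟨rfl, rfl, rfl⟩ := hsame
    obtain rfl : s11 = s21 := VLab.node.inj (h₁.lab_u.symm.trans h₂.lab_u)
    obtain rfl : s12 = s22 := VLab.node.inj (h₁.lab_w.symm.trans h₂.lab_w)
    exact ⟨C₁, C₂, .refl, .refl, h₁.gIso hT hH hH (GIsoVia.id_self H) h₂⟩
  -- Rewrite the first edge in `C₂` and commute this with the second step: the rewrite `L` of
  -- the first edge in `H` is isomorphic to `C₁`, so its step to `D₂` transports to `C₁`.
  obtain ⟨hu₁V, hw₁V, -⟩ : u₁ ∈ H.V ∧ w₁ ∈ H.V ∧ _ := hH _ h₁.mem_E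
  obtain ⟨ρ₁', D₂, h₂₁⟩ := exists_decStepAt hT (h₂.wellFormed hT hH)
    (h₂.mem_E_of_ne h₁.mem_E hsame) (by rw [h₂.lab_old u₁ hu₁V, h₁.lab_u])
    (by rw [h₂.lab_old w₁ hw₁V, h₁.lab_w])
  obtain ⟨L, h₁', hL₂⟩ := h₂.swap hT hH h₂₁ hsame
  have hC₁L : GIso C₁ L := h₁.gIso hT hH hH (GIsoVia.id_self H) h₁'
  obtain ⟨D₁, hD₁, hD₂D₁⟩ := DecStep.exists_gIso_of_gIso hT (h₁'.wellFormed hT hH)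
    (h₁.wellFormed hT hH) (gIso_equivalence.symm hC₁L) hL₂.decStep
  exact ⟨D₁, D₂, .single hD₁, .single h₂₁.decStep, gIso_equivalence.symm hD₂D₁⟩

theorem decStep_wellFounded {T : DecSystem} (hT : ValidDecSystem T) :
    WellFounded (flip (DecStep T)) :=
  (InvImage.wf encCount wellFounded_lt).mono fun H' H h => by
    obtain ⟨_, _, _, _, _, _, h⟩ := decStep_iff.1 h
    have := h.encCount_add_one hT
    show encCount H' < encCount H
    omega

/-- Any decoding system is confluent and terminating as a rewrite
system on encoded string graphs. -/
theorem decoding_system_confluent_and_terminating (T : DecSystem) (hT : ValidDecSystem T) :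
    (∀ H : LabGraph, EncodedSG H →
      ¬∃ f : ℕ → LabGraph, f 0 = H ∧ ∀ n, DecStep T (f n) (f (n + 1))) ∧
    (∀ H H₁ H₂ : LabGraph, EncodedSG H →
      Relation.ReflTransGen (DecStep T) H H₁ →
      Relation.ReflTransGen (DecStep T) H H₂ →
      ∃ K₁ K₂ : LabGraph, Relation.ReflTransGen (DecStep T) H₁ K₁ ∧
        Relation.ReflTransGen (DecStep T) H₂ K₂ ∧ GIso K₁ K₂) := by
  have hwf := decStep_wellFounded hT
  refine ⟨fun H _ => not_exists_infinite_chain hwf H, fun H H₁ H₂ hH h₁ h₂ => ?_⟩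
  exact confluent_modulo (r := DecStep T) (P := WellFormed) (fun _ _ => DecStep.wellFormed hT)
    (fun _ _ _ hH hK hHK => DecStep.exists_gIso_of_gIso hT hH hK hHK) hwf gIso_equivalence
    (fun _ _ _ hH => decStep_locallyConfluent_gIso hT hH) hH.1 h₁ h₂
end

section
/- If H' is obtained from an encoded string graph H by a full decoding, then H' is a string graph whose inputs and outputs are exactly the inputs and outputs of H: decoding neither creates nor destroys inputs or outputs. -/
/-- The set of inputs (wire-vertices of in-degree 0) of a graph. -/
def inputs (H : LabGraph) : Finset ℕ :=
  H.V.filter (fun v => (H.lab v).isWire = true ∧ inDeg H v = 0)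

/-- The set of outputs (wire-vertices of out-degree 0) of a graph. -/
def outputs (H : LabGraph) : Finset ℕ :=
  H.V.filter (fun v => (H.lab v).isWire = true ∧ outDeg H v = 0)

/-!
Decoding replaces an encoding edge between two node-vertices by a copy of a fragment that is
glued to the host graph only at those two node-vertices. A wire-vertex of the host therefore keeps
exactly its old incident edges, so it is an input (output) afterwards iff it was one before, while
each freshly created wire-vertex gets in- and out-degree one from the fragment and so is neither.
Everything about out-degrees follows from the statement about in-degrees by reversing all edges.
-/

def edgeSwap (e : ℕ × ELab × ℕ) : ℕ × ELab × ℕ := (e.2.2, e.2.1, e.1)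

lemma edgeSwap_involutive : Function.Involutive edgeSwap := fun _ => rfl

def mapEdge (ρ : ℕ → ℕ) (e : ℕ × ELab × ℕ) : ℕ × ELab × ℕ := (ρ e.1, e.2.1, ρ e.2.2)

lemma mapEdge_injOn {ρ : ℕ → ℕ} {F : LabGraph} (hρ : Set.InjOn ρ F.V) (hF : WellFormed F) :
    Set.InjOn (mapEdge ρ) F.E := by
  rintro ⟨a, l, b⟩ he ⟨a', l', b'⟩ he' heq
  simp only [mapEdge, Prod.mk.injEq] at heq
  obtain ⟨ha, rfl, hb⟩ := heq
  have ha' : a = a' := hρ (hF _ he).1 (hF _ he').1 ha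
  have hb' : b = b' := hρ (hF _ he).2.1 (hF _ he').2.1 hb
  rw [ha', hb']

def LabGraph.reverse (H : LabGraph) : LabGraph := ⟨H.V, H.E.image edgeSwap, H.lab⟩

lemma inDeg_reverse (H : LabGraph) (v : ℕ) : inDeg H.reverse v = outDeg H v := by
  rw [inDeg, outDeg, LabGraph.reverse, Finset.filter_image,
    Finset.card_image_of_injective _ edgeSwap_involutive.injective]
  rfl

lemma WellFormed.reverse {H : LabGraph} (hH : WellFormed H) : WellFormed H.reverse := by
  simp only [WellFormed, LabGraph.reverse, Finset.forall_mem_image]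
  exact fun e he => ⟨(hH e he).2.1, (hH e he).1, (hH e he).2.2.symm⟩

lemma outputs_eq_inputs_reverse (H : LabGraph) : outputs H = inputs H.reverse := by
  simp only [outputs, inputs, inDeg_reverse]
  rfl

/-- `H'` arises from `H` by deleting the edge `(ρ s, l, ρ t)` and gluing in the copy `ρ(F)` of
`F`, which meets `H` only in `ρ s` and `ρ t`. -/
structure ReplacesEdge (H H' F : LabGraph) (s t : ℕ) (l : ELab) (ρ : ℕ → ℕ) : Prop where
  edge_mem : (ρ s, l, ρ t) ∈ H.E
  injOn : Set.InjOn ρ F.V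
  map_notMem : ∀ x ∈ F.V, x ≠ s → x ≠ t → ρ x ∉ H.V
  V_eq : H'.V = H.V ∪ F.V.image ρ
  E_eq : H'.E = H.E.erase (ρ s, l, ρ t) ∪ F.E.image (mapEdge ρ)
  lab_of_mem : ∀ v ∈ H.V, H'.lab v = H.lab v
  lab_map : ∀ x ∈ F.V, H'.lab (ρ x) = F.lab x

namespace ReplacesEdge

variable {H H' F : LabGraph} {s t : ℕ} {l : ELab} {ρ : ℕ → ℕ} {v x : ℕ}

lemma reverse (h : ReplacesEdge H H' F s t l ρ) :
    ReplacesEdge H.reverse H'.reverse F.reverse t s l ρ where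
  edge_mem := Finset.mem_image_of_mem edgeSwap h.edge_mem
  injOn := h.injOn
  map_notMem x hx hxt hxs := h.map_notMem x hx hxs hxt
  V_eq := h.V_eq
  E_eq := by
    simp only [LabGraph.reverse, h.E_eq, Finset.image_union, Finset.image_image,
      Finset.image_erase edgeSwap_involutive.injective]
    rfl
  lab_of_mem := h.lab_of_mem
  lab_map := h.lab_map

lemma mem_V_of_mem (h : ReplacesEdge H H' F s t l ρ) (hv : v ∈ H.V) : v ∈ H'.V := by
  rw [h.V_eq]; exact Finset.mem_union_left _ hv

lemma map_mem (h : ReplacesEdge H H' F s t l ρ) (hx : x ∈ F.V) : ρ x ∈ H'.V := by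
  rw [h.V_eq]; exact Finset.mem_union_right _ (Finset.mem_image_of_mem ρ hx)

lemma eq_or_eq_of_map_mem (h : ReplacesEdge H H' F s t l ρ) (hx : x ∈ F.V) (hxH : ρ x ∈ H.V) :
    x = s ∨ x = t := by
  by_contra! hne
  exact h.map_notMem x hx hne.1 hne.2 hxH

lemma wellFormed (h : ReplacesEdge H H' F s t l ρ) (hH : WellFormed H) (hF : WellFormed F) :
    WellFormed H' := by
  intro e he
  simp only [h.E_eq, Finset.mem_union, Finset.mem_image] at he
  rcases he with he | ⟨f, hf, rfl⟩
  · obtain ⟨h1, h2, h12⟩ := hH e (Finset.mem_of_mem_erase he)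
    exact ⟨h.mem_V_of_mem h1, h.mem_V_of_mem h2, h12⟩
  · obtain ⟨h1, h2, h12⟩ := hF f hf
    exact ⟨h.map_mem h1, h.map_mem h2, fun heq => h12 (h.injOn h1 h2 heq)⟩

lemma inDeg_eq (h : ReplacesEdge H H' F s t l ρ) (hF : WellFormed F) (hv : v ∈ H.V)
    (hvs : v ≠ ρ s) (hvt : v ≠ ρ t) : inDeg H' v = inDeg H v := by
  unfold inDeg
  congr 1
  ext e
  simp only [h.E_eq, Finset.mem_filter, Finset.mem_union, Finset.mem_erase, Finset.mem_image]
  constructor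
  · rintro ⟨⟨-, he⟩ | ⟨f, hf, rfl⟩, hev⟩
    · exact ⟨he, hev⟩
    · subst hev
      rcases h.eq_or_eq_of_map_mem (hF f hf).2.1 hv with hfs | hft
      · exact absurd (congrArg ρ hfs) hvs
      · exact absurd (congrArg ρ hft) hvt
  · rintro ⟨he, rfl⟩
    exact ⟨Or.inl ⟨fun he0 => hvt (congrArg (·.2.2) he0), he⟩, rfl⟩

lemma inDeg_map (h : ReplacesEdge H H' F s t l ρ) (hH : WellFormed H) (hF : WellFormed F)
    (hx : x ∈ F.V) (hxH : ρ x ∉ H.V) : inDeg H' (ρ x) = inDeg F x := by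
  have hfilter : H'.E.filter (fun e => e.2.2 = ρ x) =
      (F.E.filter (fun e => e.2.2 = x)).image (mapEdge ρ) := by
    ext e
    simp only [h.E_eq, Finset.mem_filter, Finset.mem_union, Finset.mem_erase, Finset.mem_image]
    constructor
    · rintro ⟨⟨-, he⟩ | ⟨f, hf, rfl⟩, hex⟩
      · exact absurd (hex ▸ (hH e he).2.1) hxH
      · exact ⟨f, ⟨hf, h.injOn (hF f hf).2.1 hx hex⟩, rfl⟩
    · rintro ⟨f, ⟨hf, rfl⟩, rfl⟩
      exact ⟨Or.inr ⟨f, hf, rfl⟩, rfl⟩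
  rw [inDeg, hfilter, Finset.card_image_of_injOn
    ((mapEdge_injOn h.injOn hF).mono (Finset.coe_subset.mpr (Finset.filter_subset _ _)))]
  rfl

lemma exists_map_of_notMem (h : ReplacesEdge H H' F s t l ρ) (hH : WellFormed H)
    (hF : WellFormed F) (hv : v ∈ H'.V) (hvH : v ∉ H.V) :
    ∃ x ∈ F.V, H'.lab v = F.lab x ∧ inDeg H' v = inDeg F x := by
  rw [h.V_eq, Finset.mem_union, Finset.mem_image] at hv
  obtain ⟨x, hx, rfl⟩ := hv.resolve_left hvH
  exact ⟨x, hx, h.lab_map x hx, h.inDeg_map hH hF hx hvH⟩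

lemma inDeg_eq_of_isWire (h : ReplacesEdge H H' F s t l ρ) (hF : WellFormed F)
    (hs : (H.lab (ρ s)).isWire = false) (ht : (H.lab (ρ t)).isWire = false) (hv : v ∈ H.V)
    (hw : (H.lab v).isWire = true) : inDeg H' v = inDeg H v :=
  h.inDeg_eq hF hv (ne_of_apply_ne (fun v => (H.lab v).isWire) (by simp [hw, hs]))
    (ne_of_apply_ne (fun v => (H.lab v).isWire) (by simp [hw, ht]))

lemma inDeg_le_one (h : ReplacesEdge H H' F s t l ρ) (hH : WellFormed H) (hF : WellFormed F)
    (hs : (H.lab (ρ s)).isWire = false) (ht : (H.lab (ρ t)).isWire = false)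
    (hHw : ∀ v ∈ H.V, (H.lab v).isWire = true → inDeg H v ≤ 1)
    (hFw : ∀ x ∈ F.V, (F.lab x).isWire = true → inDeg F x ≤ 1)
    (hv : v ∈ H'.V) (hw : (H'.lab v).isWire = true) : inDeg H' v ≤ 1 := by
  by_cases hvH : v ∈ H.V
  · rw [h.lab_of_mem v hvH] at hw
    rw [h.inDeg_eq_of_isWire hF hs ht hvH hw]
    exact hHw v hvH hw
  · obtain ⟨x, hx, hlab, hdeg⟩ := h.exists_map_of_notMem hH hF hv hvH
    rw [hdeg]
    exact hFw x hx (hlab ▸ hw)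

lemma outDeg_le_one (h : ReplacesEdge H H' F s t l ρ) (hH : WellFormed H) (hF : WellFormed F)
    (hs : (H.lab (ρ s)).isWire = false) (ht : (H.lab (ρ t)).isWire = false)
    (hHw : ∀ v ∈ H.V, (H.lab v).isWire = true → outDeg H v ≤ 1)
    (hFw : ∀ x ∈ F.V, (F.lab x).isWire = true → outDeg F x ≤ 1)
    (hv : v ∈ H'.V) (hw : (H'.lab v).isWire = true) : outDeg H' v ≤ 1 := by
  simp only [← inDeg_reverse] at hHw hFw ⊢
  exact h.reverse.inDeg_le_one hH.reverse hF.reverse ht hs hHw hFw hv hw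

lemma inputs_eq (h : ReplacesEdge H H' F s t l ρ) (hH : WellFormed H) (hF : WellFormed F)
    (hs : (H.lab (ρ s)).isWire = false) (ht : (H.lab (ρ t)).isWire = false)
    (hFw : ∀ x ∈ F.V, (F.lab x).isWire = true → inDeg F x ≠ 0) : inputs H' = inputs H := by
  ext v
  simp only [inputs, Finset.mem_filter]
  constructor
  · rintro ⟨hv, hw, hdeg⟩
    by_cases hvH : v ∈ H.V
    · rw [h.lab_of_mem v hvH] at hw
      exact ⟨hvH, hw, (h.inDeg_eq_of_isWire hF hs ht hvH hw).symm.trans hdeg⟩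
    · obtain ⟨x, hx, hlab, hx0⟩ := h.exists_map_of_notMem hH hF hv hvH
      exact absurd (hx0.symm.trans hdeg) (hFw x hx (hlab ▸ hw))
  · rintro ⟨hv, hw, hdeg⟩
    exact ⟨h.mem_V_of_mem hv, (h.lab_of_mem v hv).symm ▸ hw,
      (h.inDeg_eq_of_isWire hF hs ht hv hw).trans hdeg⟩

lemma outputs_eq (h : ReplacesEdge H H' F s t l ρ) (hH : WellFormed H) (hF : WellFormed F)
    (hs : (H.lab (ρ s)).isWire = false) (ht : (H.lab (ρ t)).isWire = false)
    (hFw : ∀ x ∈ F.V, (F.lab x).isWire = true → outDeg F x ≠ 0) : outputs H' = outputs H := by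
  simp only [← inDeg_reverse] at hFw
  simp only [outputs_eq_inputs_reverse]
  exact h.reverse.inputs_eq hH.reverse hF.reverse ht hs hFw

lemma encodedSG (h : ReplacesEdge H H' F s t l ρ) (hH : EncodedSG H) (hF : StringGraph F)
    (hs : (H.lab (ρ s)).isWire = false) (ht : (H.lab (ρ t)).isWire = false) : EncodedSG H' := by
  obtain ⟨hWF, hlab, hdeg, hedge⟩ := hH
  obtain ⟨hWF_F, hlab_F, hdeg_F, henc_F, hnode_F⟩ := hF
  refine ⟨h.wellFormed hWF hWF_F, fun v hv => ?_, fun v hv hw => ⟨?_, ?_⟩, fun e he => ?_⟩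
  · by_cases hvH : v ∈ H.V
    · rw [h.lab_of_mem v hvH]
      exact hlab v hvH
    · obtain ⟨x, hx, hlx, -⟩ := h.exists_map_of_notMem hWF hWF_F hv hvH
      rw [hlx]
      exact hlab_F x hx
  · exact h.inDeg_le_one hWF hWF_F hs ht (fun v hv hw => (hdeg v hv hw).1)
      (fun x hx hw => (hdeg_F x hx hw).1) hv hw
  · exact h.outDeg_le_one hWF hWF_F hs ht (fun v hv hw => (hdeg v hv hw).2)
      (fun x hx hw => (hdeg_F x hx hw).2) hv hw
  · simp only [h.E_eq, Finset.mem_union, Finset.mem_image] at he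
    rcases he with he | ⟨f, hf, rfl⟩
    · have he := Finset.mem_of_mem_erase he
      rw [h.lab_of_mem _ (hWF e he).1, h.lab_of_mem _ (hWF e he).2.1]
      exact hedge e he
    · simp only [mapEdge, henc_F f hf, h.lab_map _ (hWF_F f hf).1,
        h.lab_map _ (hWF_F f hf).2.1, Bool.false_eq_true, if_false]
      exact hnode_F f hf

end ReplacesEdge

lemma EncodedSG.stringGraph_of_encCount_eq_zero {H : LabGraph} (hH : EncodedSG H)
    (h0 : encCount H = 0) : StringGraph H := by
  obtain ⟨hWF, hlab, hdeg, hedge⟩ := hH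
  have hnoEnc : ∀ e ∈ H.E, e.2.1.isEnc = false := by
    simpa [encCount, Finset.filter_eq_empty_iff] using h0
  refine ⟨hWF, hlab, hdeg, hnoEnc, fun e he => ?_⟩
  simpa [hnoEnc e he] using hedge e he

lemma DecStep.encodedSG_and_inputs_outputs_eq {T : DecSystem} {H H' : LabGraph}
    (hT : ValidDecSystem T) (hH : EncodedSG H) (hstep : DecStep T H H') :
    EncodedSG H' ∧ inputs H' = inputs H ∧ outputs H' = outputs H := by
  obtain ⟨u, a, w, s1, s2, he, hu, hw, ρ, hinj, rfl, rfl, hfresh, hV, hE, hlab, hlabρ⟩ := hstep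
  obtain ⟨-, -, -, -, -, hF, -, -, hFw⟩ := hT a s1 s2
  have h : ReplacesEdge H H' _ _ _ (.enc a) ρ := ⟨he, hinj, hfresh, hV, hE, hlab, hlabρ⟩
  have hs : (H.lab (ρ (T.rule a s1 s2).src)).isWire = false := by rw [hu]; rfl
  have ht : (H.lab (ρ (T.rule a s1 s2).tgt)).isWire = false := by rw [hw]; rfl
  exact ⟨h.encodedSG hH hF hs ht,
    h.inputs_eq hH.1 hF.1 hs ht fun x hx hxw => by simp [(hFw x hx hxw).1],
    h.outputs_eq hH.1 hF.1 hs ht fun x hx hxw => by simp [(hFw x hx hxw).2]⟩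

lemma encodedSG_and_inputs_outputs_eq_of_reflTransGen {T : DecSystem} {H H' : LabGraph}
    (hT : ValidDecSystem T) (hH : EncodedSG H) (hsteps : Relation.ReflTransGen (DecStep T) H H') :
    EncodedSG H' ∧ inputs H' = inputs H ∧ outputs H' = outputs H := by
  induction hsteps with
  | refl => exact ⟨hH, rfl, rfl⟩
  | tail _ hstep ih =>
    obtain ⟨hK, hin, hout⟩ := ih
    obtain ⟨hK', hin', hout'⟩ := hstep.encodedSG_and_inputs_outputs_eq hT hK
    exact ⟨hK', hin'.trans hin, hout'.trans hout⟩

/-- Full decoding of an encoded string graph yields a string graph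
with exactly the same inputs and outputs. -/
theorem decoding_preserves_inputs_outputs (T : DecSystem) (hT : ValidDecSystem T)
    (H H' : LabGraph) (hH : EncodedSG H) (hd : FullDecode T H H') :
    StringGraph H' ∧ inputs H' = inputs H ∧ outputs H' = outputs H := by
  obtain ⟨hsteps, hdone⟩ := hd
  obtain ⟨hH', hin, hout⟩ := encodedSG_and_inputs_outputs_eq_of_reflTransGen hT hH hsteps
  exact ⟨hH'.stringGraph_of_encCount_eq_zero hdone, hin, hout⟩
end
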